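/- arXiv:1802.03147 — 2 statements merged into one kernel-verified Lean document; each statement's English description precedes it below -/
import Mathlib

section
/- (Lemma 2, case 2 with μ < 1.) Let μ ∈ (0,1), ν ∈ (0,1), w_c, w_d > 0 with w_c + w_d = 1, and assume μ + ν > 1 and w_c/μ ≥ w_d/ν. Define f(p,β) = w_c ln(pμ + (1−p)β) + w_d ln(pν + (1−p)(1−β)). Let p* = min{ w_d/(1−μ), 1 }. Then for all (p,β) ∈ [0,1]² with pμ + (1−p)β > 0 and pν + (1−p)(1−β) > 0, we have f(p,β) ≤ f(p*, 1). -/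
/-!
The achievable pairs `(x, y) = (pμ + (1-p)β, pν + (1-p)(1-β))` form the triangle with vertices
`(μ, ν)`, `(1, 0)`, `(0, 1)`. Since `log t ≤ t - 1`, the objective `wc log x + wd log y` is
maximised at `(x₀, y₀)` as soon as the linear functional `wc x / x₀ + wd y / y₀` is at most
`wc + wd = 1` on the triangle, i.e. at its three vertices. For `p* = min (wd / (1 - μ)) 1` the
point `(x₀, y₀)` is `(wc, p* ν)` or `(μ, ν)`, and the vertex conditions reduce to
`μ + ν > 1` and `wd / ν ≤ wc / μ` respectively.
-/

open Real Set

lemma mul_log_add_mul_log_le {a b x y x₀ y₀ : ℝ} (ha : 0 ≤ a) (hb : 0 ≤ b)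
    (hx : 0 < x) (hy : 0 < y) (hx₀ : 0 < x₀) (hy₀ : 0 < y₀)
    (h : a / x₀ * x + b / y₀ * y ≤ a + b) :
    a * log x + b * log y ≤ a * log x₀ + b * log y₀ := by
  have hlog_x : log x - log x₀ ≤ x / x₀ - 1 := by
    rw [← log_div hx.ne' hx₀.ne']
    exact log_le_sub_one_of_pos (div_pos hx hx₀)
  have hlog_y : log y - log y₀ ≤ y / y₀ - 1 := by
    rw [← log_div hy.ne' hy₀.ne']
    exact log_le_sub_one_of_pos (div_pos hy hy₀)
  have hlin : a * (x / x₀ - 1) + b * (y / y₀ - 1) ≤ 0 := by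
    rw [div_mul_eq_mul_div, div_mul_eq_mul_div] at h
    rw [mul_sub, mul_sub, mul_div_assoc', mul_div_assoc']
    linarith
  nlinarith [mul_le_mul_of_nonneg_left hlog_x ha, mul_le_mul_of_nonneg_left hlog_y hb]

lemma linear_le_one_of_mem_triangle {a b μ ν p β : ℝ} (hvertex : a * μ + b * ν ≤ 1)
    (ha : a ≤ 1) (hb : b ≤ 1) (hp : p ∈ Icc (0 : ℝ) 1) (hβ : β ∈ Icc (0 : ℝ) 1) :
    a * (p * μ + (1 - p) * β) + b * (p * ν + (1 - p) * (1 - β)) ≤ 1 := by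
  obtain ⟨hp0, hp1⟩ := hp
  obtain ⟨hβ0, hβ1⟩ := hβ
  have hedge : a * β + b * (1 - β) ≤ 1 := by nlinarith
  calc a * (p * μ + (1 - p) * β) + b * (p * ν + (1 - p) * (1 - β))
      = p * (a * μ + b * ν) + (1 - p) * (a * β + b * (1 - β)) := by ring
    _ ≤ p * 1 + (1 - p) * 1 := by gcongr
    _ = 1 := by ring

lemma log_objective_le {wc wd μ ν x₀ y₀ p β : ℝ} (hwc : 0 ≤ wc) (hwd : 0 ≤ wd)
    (hw : wc + wd = 1) (hx₀ : 0 < x₀) (hy₀ : 0 < y₀)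
    (hvertex : wc / x₀ * μ + wd / y₀ * ν ≤ 1) (hc : wc ≤ x₀) (hd : wd ≤ y₀)
    (hp : p ∈ Icc (0 : ℝ) 1) (hβ : β ∈ Icc (0 : ℝ) 1)
    (hx : 0 < p * μ + (1 - p) * β) (hy : 0 < p * ν + (1 - p) * (1 - β)) :
    wc * log (p * μ + (1 - p) * β) + wd * log (p * ν + (1 - p) * (1 - β))
      ≤ wc * log x₀ + wd * log y₀ := by
  refine mul_log_add_mul_log_le hwc hwd hx hy hx₀ hy₀ ?_
  rw [hw]
  exact linear_le_one_of_mem_triangle hvertex (div_le_one_of_le₀ hc hx₀.le)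
    (div_le_one_of_le₀ hd hy₀.le) hp hβ

theorem stmt_10 (μ ν wc wd : ℝ) (hμ : μ ∈ Set.Ioo (0 : ℝ) 1) (hν : ν ∈ Set.Ioo (0 : ℝ) 1)
    (hwc : 0 < wc) (hwd : 0 < wd) (hw : wc + wd = 1)
    (hgain : 1 < μ + ν) (hratio : wd / ν ≤ wc / μ) :
    ∀ p ∈ Set.Icc (0 : ℝ) 1, ∀ β ∈ Set.Icc (0 : ℝ) 1,
      0 < p * μ + (1 - p) * β → 0 < p * ν + (1 - p) * (1 - β) →
      wc * Real.log (p * μ + (1 - p) * β) + wd * Real.log (p * ν + (1 - p) * (1 - β))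
        ≤ wc * Real.log (min (wd / (1 - μ)) 1 * μ + (1 - min (wd / (1 - μ)) 1) * 1)
          + wd * Real.log (min (wd / (1 - μ)) 1 * ν + (1 - min (wd / (1 - μ)) 1) * (1 - 1)) := by
  obtain ⟨hμ0, hμ1⟩ := hμ
  have hν0 : 0 < ν := hν.1
  have h1μ : 0 < 1 - μ := by linarith
  intro p hp β hβ hx hy
  rcases le_or_gt (wd / (1 - μ)) 1 with h | h
  · rw [min_eq_left h]
    have hq : wd / (1 - μ) * (1 - μ) = wd := div_mul_cancel₀ wd h1μ.ne'
    have hy₀ : 0 < wd / (1 - μ) * ν := mul_pos (div_pos hwd h1μ) hν0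
    rw [show wd / (1 - μ) * μ + (1 - wd / (1 - μ)) * 1 = wc by linear_combination -hq - hw,
      show (1 - wd / (1 - μ)) * (1 - 1) = 0 by ring, add_zero]
    refine log_objective_le hwc.le hwd.le hw hwc hy₀ ?_ le_rfl ?_ hp hβ hx hy
    · have hb : wd / (wd / (1 - μ) * ν) * ν = 1 - μ := by field_simp
      rw [div_self hwc.ne', hb]
      linarith
    · nlinarith [mul_pos (div_pos hwd h1μ) (show 0 < μ + ν - 1 by linarith)]
  · rw [min_eq_right h.le, one_mul, one_mul, sub_self, zero_mul, zero_mul, add_zero, add_zero]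
    have hwd' : 1 - μ ≤ wd := by linarith [(le_div_iff₀ h1μ).1 h.le]
    refine log_objective_le hwc.le hwd.le hw hμ0 hν0 ?_ (by linarith) ?_ hp hβ hx hy
    · rw [div_mul_cancel₀ wc hμ0.ne', div_mul_cancel₀ wd hν0.ne', hw]
    · have : wd / ν ≤ 1 := hratio.trans (div_le_one_of_le₀ (by linarith) hμ0.le)
      exact (div_le_one₀ hν0).1 this
end

section
/- Let γ_B, γ_E > 0. Let X and Y be independent random variables with X ~ Exp(γ_B) and Y ~ Exp(γ_E). Then E[ max( ln((1+X)/(1+Y)), 0 ) ] = Ψ( 1/γ_B + 1/γ_E ) − Ψ( 1/γ_B ). -/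
open MeasureTheory ProbabilityTheory

/-- `Psi x = eˣ Ei(-x) = -∫_0^∞ e^{-u}/(u+x) du`. -/
noncomputable def Psi (x : ℝ) : ℝ := -∫ u in Set.Ioi (0 : ℝ), Real.exp (-u) / (u + x)

open Real Set
open scoped ENNReal


lemma intA {a : ℝ} (ha : 0 < a) :
    IntegrableOn (fun u => Real.exp (-(a*u)) / (1+u)) (Set.Ioi (0:ℝ)) := by
  have h : IntegrableOn (fun x : ℝ => Real.exp (-a * x)) (Set.Ioi (0:ℝ)) :=
    exp_neg_integrableOn_Ioi 0 ha
  refine h.mono' ?_ ?_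
  · exact ((Real.measurable_exp.comp ((measurable_const.mul measurable_id).neg)).div
      (measurable_const.add measurable_id)).aestronglyMeasurable
  · refine (ae_restrict_iff' measurableSet_Ioi).2 (Filter.Eventually.of_forall fun u hu => ?_)
    have h1 : (0:ℝ) < 1 + u := by linarith [mem_Ioi.mp hu]
    rw [Real.norm_eq_abs, abs_of_nonneg (div_nonneg (Real.exp_pos _).le h1.le), neg_mul]
    exact div_le_self (Real.exp_pos _).le (by linarith [mem_Ioi.mp hu])

lemma calcA {a : ℝ} (ha : 0 < a) :
    ∫ u in Set.Ioi (0:ℝ), Real.exp (-(a*u)) / (1+u) = -Psi a := by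
  have h := integral_comp_mul_left_Ioi (fun v => Real.exp (-v) / (v + a)) 0 ha
  simp only [mul_zero] at h
  have h2 : ∫ u in Set.Ioi (0:ℝ), Real.exp (-(a*u)) / (1+u)
      = ∫ u in Set.Ioi (0:ℝ), a * (Real.exp (-(a*u)) / (a*u + a)) := by
    refine setIntegral_congr_fun measurableSet_Ioi fun u hu => ?_
    have h1 : (0:ℝ) < 1 + u := by linarith [mem_Ioi.mp hu]
    rw [show a*u + a = a*(1+u) by ring, eq_comm, div_mul_eq_div_div_swap, ← mul_div_assoc,
      mul_div_cancel_left₀ _ ha.ne']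
  rw [h2, MeasureTheory.integral_const_mul, h, Psi, smul_eq_mul]
  field_simp

lemma expMeasure_pdf (r : ℝ) : expMeasure r = volume.withDensity (exponentialPDF r) := by
  rfl

lemma expMeasure_Iic {r : ℝ} (hr : 0 < r) {u : ℝ} (hu : 0 ≤ u) :
    expMeasure r (Set.Iic u) = ENNReal.ofReal (1 - Real.exp (-(r*u))) := by
  rw [expMeasure_pdf, withDensity_apply _ measurableSet_Iic,
    lintegral_exponentialPDF_eq_antiDeriv hr u, if_pos hu]

lemma expMeasure_Ioi {r : ℝ} (hr : 0 < r) {u : ℝ} (hu : 0 ≤ u) :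
    expMeasure r (Set.Ioi u) = ENNReal.ofReal (Real.exp (-(r*u))) := by
  have : IsProbabilityMeasure (expMeasure r) := isProbabilityMeasure_expMeasure hr
  have he : Real.exp (-(r*u)) ≤ 1 := Real.exp_le_one_iff.2 (by nlinarith)
  rw [← Set.compl_Iic, measure_compl measurableSet_Iic (measure_ne_top _ _), measure_univ,
    expMeasure_Iic hr hu, ← ENNReal.ofReal_one,
    ← ENNReal.ofReal_sub _ (by linarith), show (1:ℝ) - (1 - Real.exp (-(r*u))) = Real.exp (-(r*u)) by ring]

lemma expMeasure_Iio_zero (r : ℝ) : expMeasure r (Set.Iio 0) = 0 := by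
  rw [expMeasure_pdf, withDensity_apply _ measurableSet_Iio,
    lintegral_exponentialPDF_of_nonpos le_rfl]

lemma key_pointwise {x y : ℝ} (hx : 0 ≤ x) (hy : 0 ≤ y) :
    (∫⁻ u in Set.Ioi (0:ℝ), Set.indicator (Set.Ico y x) (fun u => ENNReal.ofReal ((1+u)⁻¹)) u)
      = ENNReal.ofReal (max (Real.log ((1+x)/(1+y))) 0) := by
  rw [lintegral_indicator measurableSet_Ico _, Measure.restrict_restrict measurableSet_Ico]
  rcases le_or_gt x y with hxy | hxy
  · rw [Set.Ico_eq_empty (not_lt.2 hxy), Set.empty_inter, Measure.restrict_empty, lintegral_zero_measure]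
    rw [max_eq_right, ENNReal.ofReal_zero]
    exact Real.log_nonpos (by positivity) (div_le_one_of_le₀ (by linarith) (by linarith))
  · have hset : (Set.Ico y x ∩ Set.Ioi 0 : Set ℝ) =ᵐ[volume] (Set.Ioc y x : Set ℝ) := by
      rw [MeasureTheory.ae_eq_set]
      constructor
      · refine measure_mono_null (fun u hu => ?_) (measure_singleton y)
        obtain ⟨⟨⟨h1, h2⟩, _⟩, h4⟩ := hu
        have : u = y := by
          by_contra hne
          exact h4 ⟨lt_of_le_of_ne h1 (Ne.symm hne), h2.le⟩
        exact this
      · refine measure_mono_null (fun u hu => ?_) (measure_singleton x)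
        obtain ⟨⟨h1, h2⟩, h3⟩ := hu
        have : u = x := by
          by_contra hne
          exact h3 ⟨⟨h1.le, lt_of_le_of_ne h2 hne⟩, show (0:ℝ) < u by linarith⟩
        exact this
    rw [Measure.restrict_congr_set hset]
    have hint : IntegrableOn (fun u : ℝ => (1+u)⁻¹) (Set.Ioc y x) := by
      refine Integrable.mono' (g := fun _ => (1:ℝ)) (integrableOn_const measure_Ioc_lt_top.ne) ?_ ?_
      · exact ((measurable_const.add measurable_id).inv).aestronglyMeasurable
      · refine (ae_restrict_iff' measurableSet_Ioc).2 (Filter.Eventually.of_forall fun u hu => ?_)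
        have : (0:ℝ) < 1 + u := by linarith [hu.1]
        rw [Real.norm_eq_abs, abs_of_nonneg (by positivity)]
        exact inv_le_one_of_one_le₀ (by linarith [hu.1])
    have hnn : 0 ≤ᵐ[volume.restrict (Set.Ioc y x)] fun u : ℝ => (1+u)⁻¹ := by
      refine (ae_restrict_iff' measurableSet_Ioc).2 (Filter.Eventually.of_forall fun u hu => ?_)
      have : (0:ℝ) < 1 + u := by linarith [hu.1]
      positivity
    rw [← ofReal_integral_eq_lintegral_ofReal hint hnn]
    have : ∫ u in Set.Ioc y x, (1+u)⁻¹ = Real.log ((1+x)/(1+y)) := by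
      rw [← intervalIntegral.integral_of_le hxy.le,
        intervalIntegral.integral_comp_add_left (fun v => v⁻¹) 1,
        integral_inv_of_pos (by linarith) (by linarith)]
    rw [this, max_eq_left]
    exact Real.log_nonneg ((one_le_div (by linarith)).2 (by linarith))

theorem stmt_15 {Ω : Type*} [MeasurableSpace Ω] (μ : Measure Ω) [IsProbabilityMeasure μ]
    (γB γE : ℝ) (hγB : 0 < γB) (hγE : 0 < γE)
    (X Y : Ω → ℝ) (hXm : Measurable X) (hYm : Measurable Y)
    (hX : Measure.map X μ = expMeasure (1 / γB))
    (hY : Measure.map Y μ = expMeasure (1 / γE))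
    (hXY : IndepFun X Y μ) :
    ∫ ω, max (Real.log ((1 + X ω) / (1 + Y ω))) 0 ∂μ
      = Psi (1 / γB + 1 / γE) - Psi (1 / γB) := by
  set a : ℝ := 1 / γB with ha_def
  set b : ℝ := 1 / γE with hb_def
  have ha : 0 < a := by positivity
  have hb : 0 < b := by positivity
  -- a.e. nonnegativity of X and Y
  have hXnn : ∀ᵐ ω ∂μ, 0 ≤ X ω := by
    rw [ae_iff, show {ω | ¬ 0 ≤ X ω} = X ⁻¹' Set.Iio 0 by ext ω; simp [not_le],
      ← Measure.map_apply hXm measurableSet_Iio, hX, expMeasure_Iio_zero]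
  have hYnn : ∀ᵐ ω ∂μ, 0 ≤ Y ω := by
    rw [ae_iff, show {ω | ¬ 0 ≤ Y ω} = Y ⁻¹' Set.Iio 0 by ext ω; simp [not_le],
      ← Measure.map_apply hYm measurableSet_Iio, hY, expMeasure_Iio_zero]
  set F : Ω → ℝ := fun ω => max (Real.log ((1 + X ω) / (1 + Y ω))) 0 with hF_def
  have hFm : Measurable F :=
    (((measurable_const.add hXm).div (measurable_const.add hYm)).log).max measurable_const
  -- the double-integral representation
  set f : Ω → ℝ → ℝ≥0∞ := fun ω u =>
    Set.indicator (Set.Ico (Y ω) (X ω)) (fun v => ENNReal.ofReal ((1+v)⁻¹)) u with hf_def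
  have step1 : ∫ ω, F ω ∂μ = (∫⁻ ω, ENNReal.ofReal (F ω) ∂μ).toReal :=
    integral_eq_lintegral_of_nonneg_ae (Filter.Eventually.of_forall fun ω => le_max_right _ _)
      hFm.aestronglyMeasurable
  have step2 : ∫⁻ ω, ENNReal.ofReal (F ω) ∂μ = ∫⁻ ω, (∫⁻ u in Set.Ioi (0:ℝ), f ω u) ∂μ := by
    refine lintegral_congr_ae ?_
    filter_upwards [hXnn, hYnn] with ω h1 h2
    exact (key_pointwise h1 h2).symm
  -- measurability of the uncurried function
  have hfm : Measurable (Function.uncurry f) := by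
    have heq : Function.uncurry f =
        Set.indicator ({p : Ω × ℝ | Y p.1 ≤ p.2} ∩ {p : Ω × ℝ | p.2 < X p.1})
          (fun p => ENNReal.ofReal ((1+p.2)⁻¹)) := by
      ext p
      simp only [Function.uncurry, hf_def, Set.indicator_apply, Set.mem_Ico, Set.mem_inter_iff,
        Set.mem_setOf_eq]
    rw [heq]
    exact Measurable.indicator ((measurable_const.add measurable_snd).inv.ennreal_ofReal)
      ((measurableSet_le (hYm.comp measurable_fst) measurable_snd).inter
        (measurableSet_lt measurable_snd (hXm.comp measurable_fst)))
  have step3 : ∫⁻ ω, (∫⁻ u in Set.Ioi (0:ℝ), f ω u) ∂μ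
      = ∫⁻ u in Set.Ioi (0:ℝ), ∫⁻ ω, f ω u ∂μ :=
    lintegral_lintegral_swap hfm.aemeasurable
  -- compute the inner integral for u > 0
  have step4 : ∀ u ∈ Set.Ioi (0:ℝ), ∫⁻ ω, f ω u ∂μ
      = ENNReal.ofReal ((1+u)⁻¹ * (Real.exp (-(a*u)) * (1 - Real.exp (-(b*u))))) := by
    intro u hu
    have hu0 : (0:ℝ) < u := hu
    have hfun : (fun ω => f ω u)
        = Set.indicator (X ⁻¹' Set.Ioi u ∩ Y ⁻¹' Set.Iic u)
            (fun _ => ENNReal.ofReal ((1+u)⁻¹)) := by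
      ext ω
      by_cases h : Y ω ≤ u ∧ u < X ω
      · simp [hf_def, Set.indicator_apply, Set.mem_Ico, h, h.1, h.2]
      · simp only [hf_def, Set.indicator_apply, Set.mem_Ico]
        rw [if_neg h, Set.indicator_of_notMem (fun hc => h ⟨hc.2, hc.1⟩)]
    rw [hfun, lintegral_indicator ((hXm measurableSet_Ioi).inter (hYm measurableSet_Iic)),
      setLIntegral_const,
      hXY.measure_inter_preimage_eq_mul _ _ measurableSet_Ioi measurableSet_Iic,
      ← Measure.map_apply hXm measurableSet_Ioi, ← Measure.map_apply hYm measurableSet_Iic,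
      hX, hY, expMeasure_Ioi ha hu0.le, expMeasure_Iic hb hu0.le]
    rw [← ENNReal.ofReal_mul (by positivity), ← ENNReal.ofReal_mul (by positivity)]
  set g : ℝ → ℝ := fun u => (1+u)⁻¹ * (Real.exp (-(a*u)) * (1 - Real.exp (-(b*u)))) with hg_def
  have hgnn : ∀ u ∈ Set.Ioi (0:ℝ), 0 ≤ g u := by
    intro u hu
    have hu0 : (0:ℝ) < u := hu
    have h2 : Real.exp (-(b*u)) ≤ 1 := Real.exp_le_one_iff.2 (by nlinarith)
    have h3 : (0:ℝ) < 1 + u := by linarith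
    have h1 := (Real.exp_pos (-(a*u))).le
    exact mul_nonneg (inv_nonneg.2 h3.le) (mul_nonneg h1 (by linarith))
  have hgint : IntegrableOn g (Set.Ioi (0:ℝ)) := by
    have h : IntegrableOn (fun x : ℝ => Real.exp (-a * x)) (Set.Ioi (0:ℝ)) :=
      exp_neg_integrableOn_Ioi 0 ha
    refine h.mono' ?_ ?_
    · exact (((measurable_const.add measurable_id).inv).mul
        ((Real.measurable_exp.comp (measurable_const.mul measurable_id).neg).mul
        (measurable_const.sub (Real.measurable_exp.comp (measurable_const.mul measurable_id).neg)))).aestronglyMeasurable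
    · refine (ae_restrict_iff' measurableSet_Ioi).2 (Filter.Eventually.of_forall fun u hu => ?_)
      have hu0 : (0:ℝ) < u := hu
      have h2 : Real.exp (-(b*u)) ≤ 1 := Real.exp_le_one_iff.2 (by nlinarith)
      have h2' : 0 ≤ 1 - Real.exp (-(b*u)) := by linarith
      have h3 : (0:ℝ) < 1 + u := by linarith
      have h4 : (1+u)⁻¹ ≤ 1 := inv_le_one_of_one_le₀ (by linarith)
      have h5 : (0:ℝ) ≤ (1+u)⁻¹ := by positivity
      have h6 := (Real.exp_pos (-(a*u))).le
      rw [Real.norm_eq_abs, abs_of_nonneg (hgnn u hu), neg_mul]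
      have h7 : 1 - Real.exp (-(b*u)) ≤ 1 := by
        have := (Real.exp_pos (-(b*u))).le; linarith
      calc (1+u)⁻¹ * (Real.exp (-(a*u)) * (1 - Real.exp (-(b*u))))
          ≤ 1 * (Real.exp (-(a*u)) * 1) := by
            apply mul_le_mul h4 (mul_le_mul_of_nonneg_left h7 h6) (by positivity) zero_le_one
        _ = Real.exp (-(a*u)) := by ring
  have step5 : ∫⁻ u in Set.Ioi (0:ℝ), ∫⁻ ω, f ω u ∂μ = ENNReal.ofReal (∫ u in Set.Ioi (0:ℝ), g u) := by
    rw [setLIntegral_congr_fun measurableSet_Ioi step4,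
      ← ofReal_integral_eq_lintegral_ofReal hgint
        ((ae_restrict_iff' measurableSet_Ioi).2 (Filter.Eventually.of_forall hgnn))]
  have hfinal : ∫ u in Set.Ioi (0:ℝ), g u = Psi (a + b) - Psi a := by
    have hsplit : ∀ u : ℝ, g u
        = Real.exp (-(a*u)) / (1+u) - Real.exp (-((a+b)*u)) / (1+u) := by
      intro u
      simp only [hg_def]
      rw [show -((a+b)*u) = -(a*u) + -(b*u) by ring, Real.exp_add]
      rw [div_eq_mul_inv, div_eq_mul_inv]
      ring
    rw [integral_congr_ae (Filter.Eventually.of_forall hsplit)]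
    rw [integral_sub (intA ha) (intA (add_pos ha hb)), calcA ha, calcA (add_pos ha hb)]
    ring
  have hnn : 0 ≤ ∫ u in Set.Ioi (0:ℝ), g u :=
    setIntegral_nonneg measurableSet_Ioi hgnn
  rw [show (∫ ω, max (Real.log ((1 + X ω) / (1 + Y ω))) 0 ∂μ) = ∫ ω, F ω ∂μ from rfl, step1,
    step2, step3, step5, ENNReal.toReal_ofReal hnn, hfinal]
end
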